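/- arXiv:0904.2985 — 10 statements merged into one kernel-verified Lean document; each statement's English description precedes it below -/
import Mathlib

section
/- If Q is a regular Dirichlet form on ℓ²(V,m) where V is a countable set and m a measure of full support, then every finitely supported function on V belongs to the domain of Q. -/
/-!
Sup-norm regularity gives, for each vertex `x`, some `ψ` in the domain with `ψ x > 1/2` and
`|ψ| < 1/2` elsewhere. The normal contraction `t ↦ max (t - 1/2) 0` maps `ψ` to a positive
multiple of the indicator of `x`, so by the Dirichlet property and linearity every indicator
lies in the domain; finitely supported functions are finite linear combinations of these.
-/

open scoped ENNReal

theorem Submodule.mem_of_support_finite {R V : Type*} [Semiring R] [DecidableEq V]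
    (p : Submodule R (V → R)) (hsingle : ∀ x, Pi.single x 1 ∈ p) {φ : V → R}
    (hφ : (Function.support φ).Finite) : φ ∈ p := by
  have hsum : ∑ x ∈ hφ.toFinset, φ x • Pi.single x 1 = φ := by
    funext y
    by_cases hy : φ y = 0 <;> simp [Finset.sum_apply, Pi.single_apply, hy]
  exact hsum ▸ p.sum_mem fun x _ => p.smul_mem (φ x) (hsingle x)

theorem abs_max_sub_zero_sub_max_sub_zero_le (a s t : ℝ) :
    |max (s - a) 0 - max (t - a) 0| ≤ |s - t| :=
  (abs_max_sub_max_le_abs _ _ _).trans_eq (by rw [sub_sub_sub_cancel_right])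

def formDomain {V : Type*} (Q : (V → ℝ) → ℝ≥0∞) {u₀ : V → ℝ} (hu₀ : Q u₀ ≠ ⊤)
    (hadd : ∀ u v, Q u ≠ ⊤ → Q v ≠ ⊤ → Q (u + v) ≠ ⊤)
    (hsmul : ∀ (a : ℝ) (u : V → ℝ), Q u ≠ ⊤ → Q (a • u) ≠ ⊤) : Submodule ℝ (V → ℝ) where
  carrier := {u | Q u ≠ ⊤}
  add_mem' := hadd _ _
  zero_mem' := by simpa using hsmul 0 u₀ hu₀
  smul_mem' := hsmul

theorem single_ne_top_of_cutoff {V : Type*} [DecidableEq V] {Q : (V → ℝ) → ℝ≥0∞}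
    (hsmul : ∀ (a : ℝ) (u : V → ℝ), Q u ≠ ⊤ → Q (a • u) ≠ ⊤)
    (hmarkov : ∀ C : ℝ → ℝ, C 0 = 0 → (∀ s t, |C s - C t| ≤ |s - t|) →
      ∀ u : V → ℝ, Q (fun x => C (u x)) ≤ Q u)
    {ψ : V → ℝ} (hψ : Q ψ ≠ ⊤) {x : V} {a : ℝ} (ha : 0 ≤ a) (hx : a < ψ x)
    (hy : ∀ y, y ≠ x → ψ y ≤ a) : Q (Pi.single x 1) ≠ ⊤ := by
  have hcut : (fun y => max (ψ y - a) 0) = (ψ x - a) • Pi.single x 1 := by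
    funext y
    by_cases hyx : y = x
    · subst hyx
      simp [hx.le]
    · simp [hyx, hy y hyx]
  have hmul : Q ((ψ x - a) • Pi.single x (1 : ℝ)) ≠ ⊤ :=
    hcut ▸ ne_top_of_le_ne_top hψ
      (hmarkov (fun t => max (t - a) 0) (by simpa using ha)
        (abs_max_sub_zero_sub_max_sub_zero_le a) ψ)
  simpa [smul_smul, inv_mul_cancel₀ (sub_pos.2 hx).ne'] using hsmul (ψ x - a)⁻¹ _ hmul

theorem finitely_supported_mem_domain_of_regular_dirichlet_form_general
    (V : Type*)
    (Q : (V → ℝ) → ℝ≥0∞)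
    -- the domain is a subspace
    (hadd : ∀ u v, Q u ≠ ⊤ → Q v ≠ ⊤ → Q (u + v) ≠ ⊤)
    (hsmul : ∀ (a : ℝ) (u : V → ℝ), Q u ≠ ⊤ → Q (a • u) ≠ ⊤)
    -- Dirichlet property: normal contractions do not increase the form
    (hmarkov : ∀ C : ℝ → ℝ, C 0 = 0 → (∀ s t, |C s - C t| ≤ |s - t|) →
      ∀ u : V → ℝ, Q (fun x => C (u x)) ≤ Q u)
    -- regularity, part 1: D(Q) ∩ C_c(V) is dense in C_c(V) w.r.t. the supremum norm
    (hreg₁ : ∀ φ : V → ℝ, (Function.support φ).Finite → ∀ ε > (0:ℝ),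
      ∃ ψ : V → ℝ, (Function.support ψ).Finite ∧ Q ψ ≠ ⊤ ∧ ∀ x, |ψ x - φ x| < ε) :
    ∀ φ : V → ℝ, (Function.support φ).Finite → Q φ ≠ ⊤ := by
  classical
  obtain ⟨u₀, -, hu₀, -⟩ := hreg₁ 0 (by simp) 1 one_pos
  have hsingle : ∀ x : V, Q (Pi.single x 1) ≠ ⊤ := fun x => by
    obtain ⟨ψ, -, hψ, hclose⟩ := hreg₁ (Pi.single x 1)
      ((Set.finite_singleton x).subset Pi.support_single_subset) (1 / 2) (by norm_num)
    refine single_ne_top_of_cutoff hsmul hmarkov hψ (a := 1 / 2) (by norm_num) ?_ fun y hyx => ?_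
    · have := abs_lt.1 (hclose x)
      simp only [Pi.single_eq_same] at this
      linarith
    · have := abs_lt.1 (hclose y)
      simp only [Pi.single_eq_of_ne hyx, sub_zero] at this
      linarith
  exact fun φ hφ => (formDomain Q hu₀ hadd hsmul).mem_of_support_finite hsingle hφ

/-- If `Q` is a regular Dirichlet form on `ℓ²(V,m)` (V countable, m of full
support), then every finitely supported function belongs to the domain of `Q`
(the domain being `{u | Q u ≠ ∞}`, where `Q` takes the value `∞` off its domain). -/
theorem finitely_supported_mem_domain_of_regular_dirichlet_form
    (V : Type*) [Countable V] (m : V → ℝ) (hm : ∀ x, 0 < m x)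
    (Q : (V → ℝ) → ℝ≥0∞)
    -- the domain is contained in ℓ²(V,m)
    (hdom : ∀ u, Q u ≠ ⊤ → Summable (fun x => m x * (u x) ^ 2))
    -- the domain is a subspace
    (hadd : ∀ u v, Q u ≠ ⊤ → Q v ≠ ⊤ → Q (u + v) ≠ ⊤)
    (hsmul : ∀ (a : ℝ) (u : V → ℝ), Q u ≠ ⊤ → Q (a • u) ≠ ⊤)
    -- Dirichlet property: normal contractions do not increase the form
    (hmarkov : ∀ C : ℝ → ℝ, C 0 = 0 → (∀ s t, |C s - C t| ≤ |s - t|) →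
      ∀ u : V → ℝ, Q (fun x => C (u x)) ≤ Q u)
    -- closedness: lower semicontinuity with respect to ℓ²-convergence
    (hclosed : ∀ (u : V → ℝ) (un : ℕ → V → ℝ),
      (∀ n, Summable fun x => m x * (un n x - u x) ^ 2) →
      Filter.Tendsto (fun n => ∑' x, m x * (un n x - u x) ^ 2) Filter.atTop (nhds 0) →
      Q u ≤ Filter.liminf (fun n => Q (un n)) Filter.atTop)
    -- regularity, part 1: D(Q) ∩ C_c(V) is dense in C_c(V) w.r.t. the supremum norm
    (hreg₁ : ∀ φ : V → ℝ, (Function.support φ).Finite → ∀ ε > (0:ℝ),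
      ∃ ψ : V → ℝ, (Function.support ψ).Finite ∧ Q ψ ≠ ⊤ ∧ ∀ x, |ψ x - φ x| < ε)
    -- regularity, part 2: D(Q) ∩ C_c(V) is dense in D(Q) w.r.t. the form norm
    (hreg₂ : ∀ u : V → ℝ, Q u ≠ ⊤ → ∀ ε > (0:ℝ),
      ∃ ψ : V → ℝ, (Function.support ψ).Finite ∧ Q ψ ≠ ⊤ ∧
        Summable (fun x => m x * (ψ x - u x) ^ 2) ∧
        (∑' x, m x * (ψ x - u x) ^ 2) < ε ∧ Q (fun x => ψ x - u x) < ENNReal.ofReal ε) :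
    ∀ φ : V → ℝ, (Function.support φ).Finite → Q φ ≠ ⊤ :=
  finitely_supported_mem_domain_of_regular_dirichlet_form_general V Q hadd hsmul hmarkov hreg₁
end

section
/- (Minimum principle) Let U ⊆ V and α > 0. Suppose u : V → ℝ satisfies (L̃ + α)u ≥ 0 on U, the negative part of u restricted to U attains its minimum, and u ≥ 0 on V∖U. Then on each connected component of U, either u ≡ 0 or u > 0; in particular u ≥ 0 on V. -/
/-!
At a point `x₀ ∈ U` where `u` attains a negative global minimum, every term of `L̃u(x₀)` is
nonpositive, so `(L̃ + α)u(x₀) ≤ α u(x₀) < 0`; hence `u ≥ 0`. At a zero `x ∈ U` of the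
nonnegative `u`, `(L̃ + α)u(x) = -(1/m(x)) ∑_y b(x,y) u(y) ≥ 0` forces `u` to vanish at every
neighbour of `x`. By symmetry of `b`, being a zero of `u` is thus invariant along paths in `U`.
-/

/-- The formal Laplacian `L̃u(x) = (1/m(x)) ∑_y b(x,y)(u(x)-u(y)) + (c(x)/m(x))u(x)`. -/
noncomputable def formalL {V : Type*} (b : V → V → ℝ) (c m : V → ℝ) (u : V → ℝ) (x : V) : ℝ :=
  (1 / m x) * ∑' y, b x y * (u x - u y) + (c x / m x) * u x

theorem Relation.ReflTransGen.iff_of_forall_iff {α : Type*} {r : α → α → Prop} {P : α → Prop}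
    (h : ∀ a b, r a b → (P a ↔ P b)) {a b : α} (hab : Relation.ReflTransGen r a b) :
    P a ↔ P b := by
  induction hab with
  | refl => rfl
  | tail _ hbc ih => exact ih.trans (h _ _ hbc)

section FormalLaplacian

variable {V : Type*} {b : V → V → ℝ} {c m u : V → ℝ} {x : V}

theorem formalL_nonpos_of_forall_le (hm : 0 < m x) (hb : ∀ y, 0 ≤ b x y) (hc : 0 ≤ c x)
    (hux : u x ≤ 0) (hmin : ∀ y, u x ≤ u y) : formalL b c m u x ≤ 0 := by
  have hsum : ∑' y, b x y * (u x - u y) ≤ 0 :=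
    tsum_nonpos fun y => mul_nonpos_of_nonneg_of_nonpos (hb y) (sub_nonpos.2 (hmin y))
  unfold formalL
  have hdiff := mul_nonpos_of_nonneg_of_nonpos (one_div_pos.2 hm).le hsum
  have hpot := mul_nonpos_of_nonneg_of_nonpos (div_nonneg hc hm.le) hux
  linarith

theorem eq_zero_of_formalL_nonneg (hm : 0 < m x) (hb : ∀ y, 0 ≤ b x y) (hu : ∀ y, 0 ≤ u y)
    (hsum : Summable fun y => b x y * u y) (hux : u x = 0) (hL : 0 ≤ formalL b c m u x)
    {y : V} (hxy : 0 < b x y) : u y = 0 := by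
  have htsum : ∑' z, b x z * u z ≤ 0 := by
    have hneg : ∑' z, b x z * (u x - u z) = -∑' z, b x z * u z := by
      rw [← tsum_neg]
      simp only [hux, zero_sub, mul_neg]
    rw [formalL, hneg, hux, mul_zero, add_zero, mul_neg, neg_nonneg] at hL
    exact nonpos_of_mul_nonpos_right hL (one_div_pos.2 hm)
  have hterm : b x y * u y ≤ 0 :=
    (hsum.le_tsum y fun z _ => mul_nonneg (hb z) (hu z)).trans htsum
  exact le_antisymm (nonpos_of_mul_nonpos_right hterm hxy) (hu y)

end FormalLaplacian

theorem exists_forall_le_of_neg {V : Type*} {U : Set V} {u : V → ℝ}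
    (hmin : ∃ x₀ ∈ U, ∀ y ∈ U, min (u x₀) 0 ≤ min (u y) 0) (hout : ∀ x, x ∉ U → 0 ≤ u x)
    {x : V} (hx : u x < 0) : ∃ x₀ ∈ U, u x₀ < 0 ∧ ∀ y, u x₀ ≤ u y := by
  obtain ⟨x₀, hx₀, hx₀min⟩ := hmin
  have hxU : x ∈ U := by
    by_contra hxU
    exact (hout x hxU).not_gt hx
  have hneg : u x₀ < 0 := by
    have hlt : min (u x₀) 0 < 0 := ((hx₀min x hxU).trans (min_le_left _ _)).trans_lt hx
    exact (min_lt_iff.1 hlt).resolve_right (lt_irrefl 0)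
  refine ⟨x₀, hx₀, hneg, fun y => ?_⟩
  by_cases hy : y ∈ U
  · calc u x₀ = min (u x₀) 0 := (min_eq_left hneg.le).symm
      _ ≤ min (u y) 0 := hx₀min y hy
      _ ≤ u y := min_le_left _ _
  · exact hneg.le.trans (hout y hy)

theorem minimum_principle_general
    (V : Type*) (m : V → ℝ) (hm : ∀ x, 0 < m x)
    (b : V → V → ℝ) (c : V → ℝ)
    (hb_symm : ∀ x y, b x y = b y x) (hb_nonneg : ∀ x y, 0 ≤ b x y)
    (hc : ∀ x, 0 ≤ c x)
    (U : Set V) (α : ℝ) (hα : 0 < α) (u : V → ℝ)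
    (hdom : ∀ x, Summable fun y => b x y * |u y|)
    (hsuper : ∀ x ∈ U, 0 ≤ formalL b c m u x + α * u x)
    (hmin : ∃ x₀ ∈ U, ∀ y ∈ U, min (u x₀) 0 ≤ min (u y) 0)
    (hout : ∀ x, x ∉ U → 0 ≤ u x) :
    (∀ x, 0 ≤ u x) ∧
      ∀ x ∈ U,
        (∀ y, Relation.ReflTransGen (fun a a' => a ∈ U ∧ a' ∈ U ∧ 0 < b a a') x y → u y = 0) ∨
        (∀ y, Relation.ReflTransGen (fun a a' => a ∈ U ∧ a' ∈ U ∧ 0 < b a a') x y → 0 < u y) := by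
  have hnonneg : ∀ x, 0 ≤ u x := by
    by_contra! ⟨x, hx⟩
    obtain ⟨x₀, hx₀, hneg, hle⟩ := exists_forall_le_of_neg hmin hout hx
    have hL := formalL_nonpos_of_forall_le (hm x₀) (hb_nonneg x₀) (hc x₀) hneg.le hle
    linarith [hsuper x₀ hx₀, mul_neg_of_pos_of_neg hα hneg]
  have hzero : ∀ x ∈ U, u x = 0 → ∀ {y}, 0 < b x y → u y = 0 := fun x hx hux =>
    eq_zero_of_formalL_nonneg (hm x) (hb_nonneg x) hnonneg
      ((hdom x).congr fun y => by rw [abs_of_nonneg (hnonneg y)]) hux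
      (by simpa [hux] using hsuper x hx)
  have hzero_iff : ∀ a a', a ∈ U ∧ a' ∈ U ∧ 0 < b a a' → (u a = 0 ↔ u a' = 0) :=
    fun a a' ⟨ha, ha', hab⟩ =>
      ⟨fun h => hzero a ha h hab, fun h => hzero a' ha' h (hb_symm a a' ▸ hab)⟩
  refine ⟨hnonneg, fun x _ => ?_⟩
  by_cases hx : u x = 0
  · exact Or.inl fun y hxy => (hxy.iff_of_forall_iff hzero_iff).1 hx
  · exact Or.inr fun y hxy =>
      (hnonneg y).lt_of_ne' fun hy => hx ((hxy.iff_of_forall_iff hzero_iff).2 hy)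

/-- **Minimum principle.** If `(L̃+α)u ≥ 0` on `U`, the negative part of `u`
restricted to `U` attains its minimum, and `u ≥ 0` outside `U`, then on each connected
component of `U` either `u ≡ 0` or `u > 0`; in particular `u ≥ 0` on `V`. -/
theorem minimum_principle
    (V : Type*) [Countable V] (m : V → ℝ) (hm : ∀ x, 0 < m x)
    (b : V → V → ℝ) (c : V → ℝ)
    (hb_symm : ∀ x y, b x y = b y x) (hb_nonneg : ∀ x y, 0 ≤ b x y)
    (hb_diag : ∀ x, b x x = 0) (hb_sum : ∀ x, Summable fun y => b x y)
    (hc : ∀ x, 0 ≤ c x)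
    (U : Set V) (α : ℝ) (hα : 0 < α) (u : V → ℝ)
    (hdom : ∀ x, Summable fun y => b x y * |u y|)
    (hsuper : ∀ x ∈ U, 0 ≤ formalL b c m u x + α * u x)
    (hmin : ∃ x₀ ∈ U, ∀ y ∈ U, min (u x₀) 0 ≤ min (u y) 0)
    (hout : ∀ x, x ∉ U → 0 ≤ u x) :
    (∀ x, 0 ≤ u x) ∧
      ∀ x ∈ U,
        (∀ y, Relation.ReflTransGen (fun a a' => a ∈ U ∧ a' ∈ U ∧ 0 < b a a') x y → u y = 0) ∨
        (∀ y, Relation.ReflTransGen (fun a a' => a ∈ U ∧ a' ∈ U ∧ 0 < b a a') x y → 0 < u y) :=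
  minimum_principle_general V m hm b c hb_symm hb_nonneg hc U α hα u hdom hsuper hmin hout
end

section
/- (Monotone convergence of solutions) Let α ∈ ℝ, f : V → ℝ, and (u_n) a monotone increasing sequence of bounded non-negative functions on V converging pointwise to u, such that (L̃+α)u_n(x) → f(x) for every x. Then ∑_y b(x,y)|u(y)| < ∞ for all x and (L̃+α)u = f. -/
/-! At a vertex `x`, the identity `m(x) L̃v(x) = v(x) ∑_y b(x,y) - ∑_y b(x,y) v(y) + c(x) v(x)`
(valid whenever `∑_y b(x,y) v(y)` converges) expresses the series `∑_y b(x,y) u_n(y)` through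
quantities that converge as `n → ∞`. Monotone convergence for non-negative series then shows that
their limit is `∑_y b(x,y) u(y)`, which is therefore finite, and passing to the limit in the
identity gives `(L̃ + α) u = f`. -/

open Filter Topology

theorem hasSum_of_monotone_of_tendsto_tsum {ι : Type*} {g : ℕ → ι → ℝ} {G : ι → ℝ} {A : ℝ}
    (h0 : 0 ≤ g 0) (hmono : Monotone g) (hsum : ∀ n, Summable (g n))
    (hg : ∀ i, Tendsto (fun n => g n i) atTop (𝓝 (G i)))
    (hA : Tendsto (fun n => ∑' i, g n i) atTop (𝓝 A)) : HasSum G A := by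
  have hg_nonneg : ∀ n, 0 ≤ g n := fun n => h0.trans (hmono n.zero_le)
  have hg_le : ∀ n, g n ≤ G := fun n i => Monotone.ge_of_tendsto (fun _ _ h => hmono h i) (hg i) n
  have htsum_le : ∀ n, ∑' i, g n i ≤ A :=
    Monotone.ge_of_tendsto (fun _ _ h => (hsum _).tsum_le_tsum (hmono h) (hsum _)) hA
  refine hasSum_of_isLUB_of_nonneg A (fun i => ge_of_tendsto' (hg i) fun n => hg_nonneg n i)
    ⟨?_, fun M hM => ?_⟩
  · rintro _ ⟨s, rfl⟩
    exact le_of_tendsto' (tendsto_finsetSum s fun i _ => hg i) fun n =>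
      ((hsum n).sum_le_tsum s fun i _ => hg_nonneg n i).trans (htsum_le n)
  · exact le_of_tendsto' hA fun n => (hsum n).tsum_le_of_sum_le fun s =>
      (Finset.sum_le_sum fun i _ => hg_le n i).trans (hM ⟨s, rfl⟩)

theorem mul_formalL {V : Type*} {b : V → V → ℝ} {c m u : V → ℝ} {x : V} (hm : m x ≠ 0)
    (hb : Summable (b x)) (hbu : Summable fun y => b x y * u y) :
    m x * formalL b c m u x = u x * ∑' y, b x y - ∑' y, b x y * u y + c x * u x := by
  have hsplit : ∑' y, b x y * (u x - u y) = (∑' y, b x y) * u x - ∑' y, b x y * u y := by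
    simp_rw [mul_sub]
    rw [(hb.mul_right _).tsum_sub hbu, tsum_mul_right]
  rw [formalL, hsplit]
  field_simp

theorem summable_and_formalL_eq_of_monotone {V : Type*} {b : V → V → ℝ} {c m u : V → ℝ}
    {un : ℕ → V → ℝ} {x : V} {L : ℝ} (hm : m x ≠ 0) (hb_nonneg : 0 ≤ b x)
    (hb : Summable (b x)) (hun0 : 0 ≤ un 0) (hmono : Monotone un)
    (hu : ∀ y, Tendsto (fun n => un n y) atTop (𝓝 (u y)))
    (hbun : ∀ n, Summable fun y => b x y * un n y)
    (hL : Tendsto (fun n => formalL b c m (un n) x) atTop (𝓝 L)) :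
    Summable (fun y => b x y * u y) ∧ formalL b c m u x = L := by
  have hsum_eq : ∀ n, ∑' y, b x y * un n y
      = un n x * ∑' y, b x y + c x * un n x - m x * formalL b c m (un n) x := fun n => by
    rw [mul_formalL hm hb (hbun n)]; ring
  have hlim : HasSum (fun y => b x y * u y) (u x * ∑' y, b x y + c x * u x - m x * L) := by
    refine hasSum_of_monotone_of_tendsto_tsum (g := fun n y => b x y * un n y)
      (fun y => mul_nonneg (hb_nonneg y) (hun0 y))
      (fun _ _ h y => mul_le_mul_of_nonneg_left (hmono h y) (hb_nonneg y)) hbun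
      (fun y => (hu y).const_mul _) ?_
    simp_rw [hsum_eq]
    exact (((hu x).mul_const _).add ((hu x).const_mul _)).sub (hL.const_mul _)
  refine ⟨hlim.summable, mul_left_cancel₀ hm ?_⟩
  rw [mul_formalL hm hb hlim.summable, hlim.tsum_eq]
  ring

theorem monotone_convergence_of_solutions_general
    (V : Type*) (m : V → ℝ) (hm : ∀ x, 0 < m x)
    (b : V → V → ℝ) (c : V → ℝ)
    (hb_nonneg : ∀ x y, 0 ≤ b x y)
    (hb_sum : ∀ x, Summable fun y => b x y)
    (α : ℝ) (f u : V → ℝ) (un : ℕ → V → ℝ)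
    (hpos : ∀ n x, 0 ≤ un n x)
    (hmono : ∀ n x, un n x ≤ un (n + 1) x)
    (hptw : ∀ x, Filter.Tendsto (fun n => un n x) Filter.atTop (nhds (u x)))
    (hdomn : ∀ n x, Summable fun y => b x y * |un n y|)
    (hconv : ∀ x, Filter.Tendsto (fun n => formalL b c m (un n) x + α * un n x)
      Filter.atTop (nhds (f x))) :
    (∀ x, Summable fun y => b x y * |u y|) ∧
      ∀ x, formalL b c m u x + α * u x = f x := by
  have hu_nonneg : ∀ y, 0 ≤ u y := fun y => ge_of_tendsto' (hptw y) fun n => hpos n y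
  have hlimit : ∀ x, Summable (fun y => b x y * u y) ∧ formalL b c m u x = f x - α * u x :=
    fun x => summable_and_formalL_eq_of_monotone (hm x).ne' (hb_nonneg x) (hb_sum x) (hpos 0)
      (monotone_nat_of_le_succ hmono) hptw
      (fun n => by simpa only [abs_of_nonneg (hpos n _)] using hdomn n x)
      (by simpa using (hconv x).sub ((hptw x).const_mul α))
  refine ⟨fun x => ?_, fun x => by rw [(hlimit x).2]; ring⟩
  simpa only [abs_of_nonneg (hu_nonneg _)] using (hlimit x).1

/-- **Monotone convergence of solutions.** If `(u_n)` is a monotone increasing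
sequence of bounded non-negative functions converging pointwise to `u` with
`(L̃+α)u_n(x) → f(x)` for every `x`, then `u` lies in the formal domain of `L̃` and
`(L̃+α)u = f`. -/
theorem monotone_convergence_of_solutions
    (V : Type*) [Countable V] (m : V → ℝ) (hm : ∀ x, 0 < m x)
    (b : V → V → ℝ) (c : V → ℝ)
    (hb_symm : ∀ x y, b x y = b y x) (hb_nonneg : ∀ x y, 0 ≤ b x y)
    (hb_diag : ∀ x, b x x = 0) (hb_sum : ∀ x, Summable fun y => b x y)
    (hc : ∀ x, 0 ≤ c x)
    (α : ℝ) (f u : V → ℝ) (un : ℕ → V → ℝ)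
    (hpos : ∀ n x, 0 ≤ un n x)
    (hbdd : ∀ n, ∃ C, ∀ x, un n x ≤ C)
    (hmono : ∀ n x, un n x ≤ un (n + 1) x)
    (hptw : ∀ x, Filter.Tendsto (fun n => un n x) Filter.atTop (nhds (u x)))
    (hdomn : ∀ n x, Summable fun y => b x y * |un n y|)
    (hconv : ∀ x, Filter.Tendsto (fun n => formalL b c m (un n) x + α * un n x)
      Filter.atTop (nhds (f x))) :
    (∀ x, Summable fun y => b x y * |u y|) ∧
      ∀ x, formalL b c m u x + α * u x = f x :=
  monotone_convergence_of_solutions_general V m hm b c hb_nonneg hb_sum α f u un hpos hmono hptw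
    hdomn hconv
end

section
/- (Positivity improving) Let (V,b,c) be a connected weighted graph and L the generator of the associated regular Dirichlet form on ℓ²(V,m). Then the resolvent (L+α)^{-1} for α>0 maps non-negative nontrivial ℓ²-functions to strictly positive functions. -/
section MinimumPrinciple

variable {V : Type*} {b : V → V → ℝ} {c m u : V → ℝ}

theorem formalL_zero (x : V) : formalL b c m 0 x = 0 := by
  simp [formalL]

theorem formalL_of_eq_zero {x : V} (hx : u x = 0) :
    formalL b c m u x = -((1 / m x) * ∑' y, b x y * u y) := by
  simp [formalL, hx, tsum_neg]

theorem eq_zero_of_pos_weight_of_formalL_nonneg {x : V} (hb : ∀ y, 0 ≤ b x y) (hm : 0 < m x)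
    (hu : ∀ y, 0 ≤ u y) (hsum : Summable fun y => b x y * u y)
    (hL : 0 ≤ formalL b c m u x) (hx : u x = 0) {y : V} (hxy : 0 < b x y) : u y = 0 := by
  have hterm_nonneg : ∀ z, 0 ≤ b x z * u z := fun z => mul_nonneg (hb z) (hu z)
  have hsum_zero : ∑' z, b x z * u z = 0 := by
    rw [formalL_of_eq_zero hx, neg_nonneg] at hL
    exact le_antisymm (nonpos_of_mul_nonpos_right hL (one_div_pos.mpr hm))
      (tsum_nonneg hterm_nonneg)
  have hterms : (fun z => b x z * u z) = 0 :=
    (hasSum_zero_iff_of_nonneg hterm_nonneg).mp (hsum_zero ▸ hsum.hasSum)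
  exact (mul_eq_zero.mp (congrFun hterms y)).resolve_left hxy.ne'

theorem eq_zero_of_formalL_add_mul_nonneg_of_eq_zero {α : ℝ}
    (hconn : ∀ x y : V, Relation.ReflTransGen (fun a a' => 0 < b a a') x y)
    (hb : ∀ x y, 0 ≤ b x y) (hm : ∀ x, 0 < m x) (hu : ∀ x, 0 ≤ u x)
    (hsum : ∀ x, Summable fun y => b x y * u y)
    (hsuper : ∀ x, 0 ≤ formalL b c m u x + α * u x) {x : V} (hx : u x = 0) : u = 0 := by
  suffices ∀ y, u y = 0 from funext this
  intro y
  induction hconn x y with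
  | refl => exact hx
  | @tail z w _ hzw hz =>
    have hL := hsuper z
    rw [hz, mul_zero, add_zero] at hL
    exact eq_zero_of_pos_weight_of_formalL_nonneg (hb z) (hm z) hu (hsum z) hL hz hzw

end MinimumPrinciple

theorem resolvent_positivity_improving_general
    (V : Type*) (m : V → ℝ) (hm : ∀ x, 0 < m x)
    (b : V → V → ℝ) (c : V → ℝ)
    (hb_nonneg : ∀ x y, 0 ≤ b x y)
    (hconn : ∀ x y : V, Relation.ReflTransGen (fun a a' => 0 < b a a') x y)
    (α : ℝ)
    (f : V → ℝ)
    (hf_nonneg : ∀ x, 0 ≤ f x) (hf_ne : ∃ x, f x ≠ 0)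
    (u : V → ℝ)
    -- u = (L+α)⁻¹ f : non-negative (positivity preserving), in ℓ², solves (L̃+α)u = f
    (hu_nonneg : ∀ x, 0 ≤ u x)
    (hu_dom : ∀ x, Summable fun y => b x y * |u y|)
    (hu_eq : ∀ x, formalL b c m u x + α * u x = f x) :
    ∀ x, 0 < u x := by
  intro x
  refine (hu_nonneg x).lt_of_ne' fun hx => ?_
  have hsum : ∀ x, Summable fun y => b x y * u y := fun x => by
    simpa only [abs_of_nonneg (hu_nonneg _)] using hu_dom x
  have hu_zero : u = 0 := eq_zero_of_formalL_add_mul_nonneg_of_eq_zero hconn hb_nonneg hm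
    hu_nonneg hsum (fun x => hu_eq x ▸ hf_nonneg x) hx
  obtain ⟨z, hz⟩ := hf_ne
  refine hz ?_
  rw [← hu_eq z, hu_zero, formalL_zero, Pi.zero_apply, mul_zero, add_zero]

/-- **Positivity improving.** Let `(V,b,c)` be a connected weighted graph.
The resolvent `u = (L+α)⁻¹ f` (for `α > 0`) is a non-negative `ℓ²`-function solving
`(L̃+α)u = f` (these are the properties of the resolvent of the associated regular
Dirichlet form). If `f ≥ 0` is nontrivial then `u` is strictly positive. -/
theorem resolvent_positivity_improving
    (V : Type*) [Countable V] (m : V → ℝ) (hm : ∀ x, 0 < m x)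
    (b : V → V → ℝ) (c : V → ℝ)
    (hb_symm : ∀ x y, b x y = b y x) (hb_nonneg : ∀ x y, 0 ≤ b x y)
    (hb_diag : ∀ x, b x x = 0) (hb_sum : ∀ x, Summable fun y => b x y)
    (hc : ∀ x, 0 ≤ c x)
    (hconn : ∀ x y : V, Relation.ReflTransGen (fun a a' => 0 < b a a') x y)
    (α : ℝ) (hα : 0 < α)
    (f : V → ℝ) (hf_l2 : Summable fun x => m x * f x ^ 2)
    (hf_nonneg : ∀ x, 0 ≤ f x) (hf_ne : ∃ x, f x ≠ 0)
    (u : V → ℝ)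
    -- u = (L+α)⁻¹ f : non-negative (positivity preserving), in ℓ², solves (L̃+α)u = f
    (hu_l2 : Summable fun x => m x * u x ^ 2)
    (hu_nonneg : ∀ x, 0 ≤ u x)
    (hu_dom : ∀ x, Summable fun y => b x y * |u y|)
    (hu_eq : ∀ x, formalL b c m u x + α * u x = f x) :
    ∀ x, 0 < u x :=
  resolvent_positivity_improving_general V m hm b c hb_nonneg hconn α f hf_nonneg hf_ne u hu_nonneg
    hu_dom hu_eq
end

section
/- Assume condition (A): every infinite path of pairwise distinct vertices connected by edges of positive weight has infinite m-measure. If α > 0, p ∈ [1,∞), and u ∈ ℓ^p(V,m) satisfies (L̃+α)u ≥ 0, then u ≥ 0. -/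
section MinimumPrinciple

variable {V : Type*} {b : V → V → ℝ} {c m u : V → ℝ} {x : V}

/-- No summability is needed: every term of the sum is nonpositive, and so is its junk value. -/
theorem formalL_nonpos_of_forall_adj_le (hm : 0 < m x) (hb : ∀ y, 0 ≤ b x y) (hc : 0 ≤ c x)
    (hux : u x ≤ 0) (hmin : ∀ y, 0 < b x y → u x ≤ u y) : formalL b c m u x ≤ 0 := by
  have hsum : ∑' y, b x y * (u x - u y) ≤ 0 := by
    refine tsum_nonpos fun y => ?_
    rcases (hb y).eq_or_lt with hzero | hpos
    · simp [← hzero]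
    · exact mul_nonpos_of_nonneg_of_nonpos hpos.le (sub_nonpos.mpr (hmin y hpos))
  unfold formalL
  have hcoef : 0 ≤ c x / m x := div_nonneg hc hm.le
  nlinarith [mul_nonpos_of_nonneg_of_nonpos (one_div_pos.mpr hm).le hsum,
    mul_nonpos_of_nonneg_of_nonpos hcoef hux]

theorem exists_lt_of_supersolution_of_neg (hm : 0 < m x) (hb : ∀ y, 0 ≤ b x y) (hc : 0 ≤ c x)
    {α : ℝ} (hα : 0 < α) (hsuper : 0 ≤ formalL b c m u x + α * u x) (hux : u x < 0) :
    ∃ y, 0 < b x y ∧ u y < u x := by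
  by_contra! hmin
  have hL := formalL_nonpos_of_forall_adj_le hm hb hc hux.le hmin
  nlinarith [mul_neg_of_pos_of_neg hα hux]

end MinimumPrinciple

theorem exists_strictAnti_path {V : Type*} (r : V → V → Prop) (u : V → ℝ) (P : V → Prop)
    {x₀ : V} (hx₀ : P x₀) (hstep : ∀ x, P x → ∃ y, P y ∧ r x y ∧ u y < u x) :
    ∃ s : ℕ → V, s 0 = x₀ ∧ (∀ n, P (s n)) ∧ (∀ n, r (s n) (s (n + 1))) ∧ StrictAnti (u ∘ s) := by
  choose! f hfP hfr hflt using hstep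
  have hP : ∀ n, P (f^[n] x₀) := by
    intro n
    induction n with
    | zero => exact hx₀
    | succ n ih => rw [Function.iterate_succ_apply']; exact hfP _ ih
  refine ⟨fun n => f^[n] x₀, rfl, hP, fun n => ?_, strictAnti_nat_of_succ_lt fun n => ?_⟩
  · simp only [Function.iterate_succ_apply']; exact hfr _ (hP n)
  · simp only [Function.comp_apply, Function.iterate_succ_apply']; exact hflt _ (hP n)

theorem Summable.of_mul_of_le_right {ι : Type*} {f g : ι → ℝ} {ε : ℝ} (hε : 0 < ε)
    (hf : ∀ i, 0 ≤ f i) (hg : ∀ i, ε ≤ g i) (h : Summable fun i => f i * g i) : Summable f := by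
  refine (h.div_const ε).of_nonneg_of_le hf fun i => ?_
  rw [le_div_iff₀ hε]
  exact mul_le_mul_of_nonneg_left (hg i) (hf i)

theorem lp_supersolution_nonneg_general
    (V : Type*) (m : V → ℝ) (hm : ∀ x, 0 < m x)
    (b : V → V → ℝ) (c : V → ℝ)
    (hb_nonneg : ∀ x y, 0 ≤ b x y)
    (hc : ∀ x, 0 ≤ c x)
    -- condition (A)
    (hA : ∀ x : ℕ → V, Function.Injective x → (∀ n, 0 < b (x n) (x (n + 1))) →
      ¬ Summable (fun n => m (x n)))
    (α : ℝ) (hα : 0 < α) (p : ℝ) (hp : 1 ≤ p)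
    (u : V → ℝ)
    (hu_lp : Summable fun x => m x * |u x| ^ p)
    (hu_super : ∀ x, 0 ≤ formalL b c m u x + α * u x) :
    ∀ x, 0 ≤ u x := by
  by_contra! ⟨x₀, hx₀⟩
  obtain ⟨s, hs0, hs_le, hs_edge, hs_anti⟩ :=
    exists_strictAnti_path (fun x y => 0 < b x y) u (fun x => u x ≤ u x₀) le_rfl
      fun x hx => by
        obtain ⟨y, hxy, hyx⟩ := exists_lt_of_supersolution_of_neg (hm x) (hb_nonneg x) (hc x) hα
          (hu_super x) (hx.trans_lt hx₀)
        exact ⟨y, hyx.le.trans hx, hxy, hyx⟩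
  have hs_inj : Function.Injective s := hs_anti.injective.of_comp
  refine hA s hs_inj hs_edge <|
    Summable.of_mul_of_le_right (g := fun n => |u (s n)| ^ p) (ε := |u x₀| ^ p)
      (Real.rpow_pos_of_pos (abs_pos.mpr hx₀.ne) p) (fun n => (hm _).le) (fun n => ?_) (hu_lp.comp_injective hs_inj)
  exact Real.rpow_le_rpow (abs_nonneg _) (abs_le_abs_of_nonpos hx₀.le (hs_le n)) (by linarith)

/-- Under condition (A) (any infinite path of pairwise distinct vertices
has infinite measure), if `α > 0`, `p ∈ [1,∞)` and `u ∈ ℓᵖ(V,m)` satisfies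
`(L̃+α)u ≥ 0`, then `u ≥ 0`. -/
theorem lp_supersolution_nonneg
    (V : Type*) [Countable V] (m : V → ℝ) (hm : ∀ x, 0 < m x)
    (b : V → V → ℝ) (c : V → ℝ)
    (hb_symm : ∀ x y, b x y = b y x) (hb_nonneg : ∀ x y, 0 ≤ b x y)
    (hb_diag : ∀ x, b x x = 0) (hb_sum : ∀ x, Summable fun y => b x y)
    (hc : ∀ x, 0 ≤ c x)
    -- condition (A)
    (hA : ∀ x : ℕ → V, Function.Injective x → (∀ n, 0 < b (x n) (x (n + 1))) →
      ¬ Summable (fun n => m (x n)))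
    (α : ℝ) (hα : 0 < α) (p : ℝ) (hp : 1 ≤ p)
    (u : V → ℝ)
    (hu_lp : Summable fun x => m x * |u x| ^ p)
    (hu_dom : ∀ x, Summable fun y => b x y * |u y|)
    (hu_super : ∀ x, 0 ≤ formalL b c m u x + α * u x) :
    ∀ x, 0 ≤ u x :=
  lp_supersolution_nonneg_general V m hm b c hb_nonneg hc hA α hα p hp u hu_lp hu_super
end

section
/- Assume condition (A). If α > 0, p ∈ [1,∞), and u ∈ ℓ^p(V,m) solves (L̃+α)u = 0, then u ≡ 0. -/
theorem formalL_neg {V : Type*} (b : V → V → ℝ) (c m u : V → ℝ) (x : V) :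
    formalL b c m (-u) x = -formalL b c m u x := by
  have hterm : ∀ y, b x y * ((-u) x - (-u) y) = -(b x y * (u x - u y)) := fun y => by
    simp only [Pi.neg_apply]; ring
  rw [formalL, formalL, tsum_congr hterm, tsum_neg, Pi.neg_apply]
  ring

theorem exists_neighbor_gt_of_formalL_add_mul_nonpos {V : Type*} {m : V → ℝ}
    {b : V → V → ℝ} {c : V → ℝ} {α : ℝ} {v : V → ℝ} {x : V} (hm : 0 < m x)
    (hb_nonneg : ∀ y, 0 ≤ b x y) (hc : 0 ≤ c x) (hα : 0 < α)
    (hv : formalL b c m v x + α * v x ≤ 0) (hx : 0 < v x) : ∃ y, 0 < b x y ∧ v x < v y := by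
  by_contra! h
  have hsum : 0 ≤ ∑' y, b x y * (v x - v y) := tsum_nonneg fun y => by
    rcases (hb_nonneg y).eq_or_lt with hb | hb
    · simp [← hb]
    · exact mul_nonneg hb.le (sub_nonneg.mpr (h y hb))
  have hdiff : 0 ≤ (1 / m x) * ∑' y, b x y * (v x - v y) :=
    mul_nonneg (one_div_pos.mpr hm).le hsum
  have hpot : 0 ≤ (c x / m x) * v x := mul_nonneg (div_nonneg hc hm.le) hx.le
  have := mul_pos hα hx
  unfold formalL at hv
  linarith

theorem exists_chain_strictMono {V β : Type*} [Preorder β] {r : V → V → Prop} {v : V → β}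
    (x₀ : V) (h : ∀ x, v x₀ ≤ v x → ∃ y, r x y ∧ v x < v y) :
    ∃ s : ℕ → V, s 0 = x₀ ∧ (∀ n, r (s n) (s (n + 1))) ∧ StrictMono (v ∘ s) := by
  choose g hg using fun x : {x // v x₀ ≤ v x} => h x x.2
  let next : {x // v x₀ ≤ v x} → {x // v x₀ ≤ v x} := fun x => ⟨g x, x.2.trans (hg x).2.le⟩
  have hstep : ∀ n, (next^[n + 1] ⟨x₀, le_rfl⟩).1 = g (next^[n] ⟨x₀, le_rfl⟩) := fun n =>
    congrArg Subtype.val (Function.iterate_succ_apply' next n _)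
  refine ⟨fun n => (next^[n] ⟨x₀, le_rfl⟩).1, rfl, fun n => ?_, strictMono_nat_of_lt_succ fun n => ?_⟩
  · simpa only [hstep] using (hg _).1
  · simpa only [Function.comp_apply, hstep] using (hg _).2

theorem summable_of_summable_mul_rpow {ι : Type*} {w a : ι → ℝ} {p C : ℝ}
    (hw : ∀ i, 0 ≤ w i) (hp : 0 ≤ p) (hC : 0 < C) (haC : ∀ i, C ≤ |a i|)
    (h : Summable fun i => w i * |a i| ^ p) : Summable w := by
  have hCp : 0 < C ^ p := Real.rpow_pos_of_pos hC p
  refine (h.div_const (C ^ p)).of_nonneg_of_le hw fun i => ?_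
  rw [le_div_iff₀ hCp]
  exact mul_le_mul_of_nonneg_left (Real.rpow_le_rpow hC.le (haC i) hp) (hw i)

theorem formalL_subsolution_nonpos {V : Type*} (m : V → ℝ) (hm : ∀ x, 0 < m x)
    (b : V → V → ℝ) (c : V → ℝ) (hb_nonneg : ∀ x y, 0 ≤ b x y) (hc : ∀ x, 0 ≤ c x)
    (hA : ∀ x : ℕ → V, Function.Injective x → (∀ n, 0 < b (x n) (x (n + 1))) →
      ¬ Summable (fun n => m (x n)))
    {α : ℝ} (hα : 0 < α) {p : ℝ} (hp : 0 ≤ p) {v : V → ℝ}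
    (hv_lp : Summable fun x => m x * |v x| ^ p)
    (hv : ∀ x, formalL b c m v x + α * v x ≤ 0) (x₀ : V) : v x₀ ≤ 0 := by
  by_contra! hx₀
  obtain ⟨s, hs₀, hs_edge, hs_mono⟩ := exists_chain_strictMono (r := fun x y => 0 < b x y) x₀
    fun x hx => exists_neighbor_gt_of_formalL_add_mul_nonpos (hm x) (hb_nonneg x) (hc x) hα
      (hv x) (hx₀.trans_le hx)
  have hs_inj : Function.Injective s := hs_mono.injective.of_comp
  have hs_ge : ∀ n, v x₀ ≤ |v (s n)| := fun n => by
    simpa [hs₀] using (hs_mono.monotone (Nat.zero_le n)).trans (le_abs_self _)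
  exact hA s hs_inj hs_edge <| summable_of_summable_mul_rpow (fun n => (hm (s n)).le) hp hx₀ hs_ge
    (hv_lp.comp_injective hs_inj)

theorem lp_solution_unique_general
    (V : Type*) (m : V → ℝ) (hm : ∀ x, 0 < m x)
    (b : V → V → ℝ) (c : V → ℝ)
    (hb_nonneg : ∀ x y, 0 ≤ b x y)
    (hc : ∀ x, 0 ≤ c x)
    -- condition (A)
    (hA : ∀ x : ℕ → V, Function.Injective x → (∀ n, 0 < b (x n) (x (n + 1))) →
      ¬ Summable (fun n => m (x n)))
    (α : ℝ) (hα : 0 < α) (p : ℝ) (hp : 1 ≤ p)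
    (u : V → ℝ)
    (hu_lp : Summable fun x => m x * |u x| ^ p)
    (hu_eq : ∀ x, formalL b c m u x + α * u x = 0) :
    ∀ x, u x = 0 := by
  have hp₀ : 0 ≤ p := zero_le_one.trans hp
  have hu_nonpos := formalL_subsolution_nonpos m hm b c hb_nonneg hc hA hα hp₀ hu_lp
    fun x => (hu_eq x).le
  have hneg_nonpos := formalL_subsolution_nonpos m hm b c hb_nonneg hc hA hα hp₀ (v := -u)
    (by simpa only [Pi.neg_apply, abs_neg] using hu_lp)
    fun x => by rw [formalL_neg, Pi.neg_apply]; linarith [hu_eq x]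
  exact fun x => le_antisymm (hu_nonpos x) (neg_nonpos.mp (hneg_nonpos x))

/-- **Uniqueness of solutions on ℓᵖ.** Under condition (A), if `α > 0`,
`p ∈ [1,∞)` and `u ∈ ℓᵖ(V,m)` solves `(L̃+α)u = 0`, then `u ≡ 0`. -/
theorem lp_solution_unique
    (V : Type*) [Countable V] (m : V → ℝ) (hm : ∀ x, 0 < m x)
    (b : V → V → ℝ) (c : V → ℝ)
    (hb_symm : ∀ x y, b x y = b y x) (hb_nonneg : ∀ x y, 0 ≤ b x y)
    (hb_diag : ∀ x, b x x = 0) (hb_sum : ∀ x, Summable fun y => b x y)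
    (hc : ∀ x, 0 ≤ c x)
    -- condition (A)
    (hA : ∀ x : ℕ → V, Function.Injective x → (∀ n, 0 < b (x n) (x (n + 1))) →
      ¬ Summable (fun n => m (x n)))
    (α : ℝ) (hα : 0 < α) (p : ℝ) (hp : 1 ≤ p)
    (u : V → ℝ)
    (hu_lp : Summable fun x => m x * |u x| ^ p)
    (hu_dom : ∀ x, Summable fun y => b x y * |u y|)
    (hu_eq : ∀ x, formalL b c m u x + α * u x = 0) :
    ∀ x, u x = 0 :=
  lp_solution_unique_general V m hm b c hb_nonneg hc hA α hα p hp u hu_lp hu_eq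
end

section
/- The following are equivalent: (i) L̃ maps C_c(V) into ℓ²(V,m); (ii) for every x ∈ V, the function y ↦ b(x,y)/m(y) belongs to ℓ²(V,m). -/
open Finset Filter Function

theorem summable_mul_sq_finset_sum {ι α : Type*} {w : α → ℝ} (hw : ∀ x, 0 ≤ w x)
    (s : Finset ι) {f : ι → α → ℝ} (hf : ∀ i ∈ s, Summable fun x => w x * f i x ^ 2) :
    Summable fun x => w x * (∑ i ∈ s, f i x) ^ 2 := by
  have hmaj : Summable fun x => (#s : ℝ) * ∑ i ∈ s, w x * f i x ^ 2 :=
    (summable_sum hf).mul_left _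
  refine .of_nonneg_of_le (fun x => mul_nonneg (hw x) (sq_nonneg _)) (fun x => ?_) hmaj
  calc w x * (∑ i ∈ s, f i x) ^ 2 ≤ w x * (#s * ∑ i ∈ s, f i x ^ 2) :=
        mul_le_mul_of_nonneg_left sq_sum_le_card_mul_sum_sq (hw x)
    _ = #s * ∑ i ∈ s, w x * f i x ^ 2 := by rw [mul_sum, mul_sum, mul_sum]; ring_nf

section formalL

variable {V : Type*} (b : V → V → ℝ) (c m : V → ℝ)

theorem formalL_apply_of_eq_zero {u : V → ℝ} {x : V} (hx : u x = 0) :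
    formalL b c m u x = -∑' y, u y * (b x y / m x) := by
  simp only [formalL, hx, zero_sub, mul_neg, tsum_neg, mul_zero, add_zero, ← tsum_mul_left]
  exact congrArg _ (tsum_congr fun y => by ring)

theorem formalL_apply_of_support_subset {u : V → ℝ} {s : Finset V} (hs : support u ⊆ s)
    {x : V} (hx : x ∉ s) : formalL b c m u x = -∑ y ∈ s, u y * (b x y / m x) := by
  have hu : ∀ y ∉ s, u y = 0 := fun y hy => notMem_support.1 fun h => hy (hs h)
  rw [formalL_apply_of_eq_zero b c m (hu x hx),
    tsum_eq_sum fun y hy => by rw [hu y hy, zero_mul]]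

theorem formalL_single_apply_of_ne [DecidableEq V] {x z : V} (hxz : x ≠ z) :
    formalL b c m (Pi.single z 1) x = -(b x z / m x) := by
  rw [formalL_apply_of_support_subset b c m (s := {z}) (by simp)
    (by simpa using hxz), sum_singleton, Pi.single_eq_same, one_mul]

end formalL

theorem formalL_maps_Cc_to_l2_iff_general
    (V : Type*) (m : V → ℝ) (hm : ∀ x, 0 < m x)
    (b : V → V → ℝ) (c : V → ℝ)
    (hb_symm : ∀ x y, b x y = b y x) :
    (∀ φ : V → ℝ, (Function.support φ).Finite →
        Summable fun x => m x * (formalL b c m φ x) ^ 2) ↔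
    (∀ x : V, Summable fun y => m y * (b x y / m y) ^ 2) := by
  classical
  constructor
  · intro H z
    refine (H (Pi.single z 1) ((Set.finite_singleton z).subset Pi.support_single_subset))
      |>.congr_cofinite ?_
    filter_upwards [(Set.finite_singleton z).eventually_cofinite_notMem] with x hxz
    rw [formalL_single_apply_of_ne b c m hxz, hb_symm x z, neg_sq]
  · intro H φ hφ
    have hsum : Summable fun x => m x * (∑ y ∈ hφ.toFinset, φ y * (b y x / m x)) ^ 2 :=
      summable_mul_sq_finset_sum (fun x => (hm x).le) _ fun y _ =>
        ((H y).mul_left (φ y ^ 2)).congr fun x => by ring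
    refine hsum.congr_cofinite ?_
    filter_upwards [hφ.toFinset.finite_toSet.eventually_cofinite_notMem] with x hx
    rw [formalL_apply_of_support_subset b c m hφ.coe_toFinset.ge hx, neg_sq]
    simp_rw [hb_symm x]

/-- `L̃` maps finitely supported functions into `ℓ²(V,m)` if and only if
for every `x ∈ V` the function `y ↦ b(x,y)/m(y)` belongs to `ℓ²(V,m)`. -/
theorem formalL_maps_Cc_to_l2_iff
    (V : Type*) [Countable V] (m : V → ℝ) (hm : ∀ x, 0 < m x)
    (b : V → V → ℝ) (c : V → ℝ)
    (hb_symm : ∀ x y, b x y = b y x) (hb_nonneg : ∀ x y, 0 ≤ b x y)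
    (hb_diag : ∀ x, b x x = 0) (hb_sum : ∀ x, Summable fun y => b x y)
    (hc : ∀ x, 0 ≤ c x) :
    (∀ φ : V → ℝ, (Function.support φ).Finite →
        Summable fun x => m x * (formalL b c m φ x) ^ 2) ↔
    (∀ x : V, Summable fun y => m y * (b x y / m y) ^ 2) :=
  formalL_maps_Cc_to_l2_iff_general V m hm b c hb_symm
end

section
/- Suppose for every x ∈ V the function y ↦ b(x,y)/m(y) is in ℓ²(V,m). Then every u ∈ ℓ²(V,m) satisfies ∑_y b(x,y)|u(y)| < ∞ for all x, and for u ∈ ℓ²(V,m), v ∈ C_c(V), the sums ∑_x u(x) L̃v(x) m(x), ∑_x L̃u(x) v(x) m(x), and (1/2)∑_{x,y} b(x,y)(u(x)−u(y))(v(x)−v(y)) + ∑_x c(x)u(x)v(x) converge absolutely and all coincide. -/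
/-!
The weighted AM–GM inequality `|b(x,y) u(y)| ≤ ½ (m(y) (b(x,y)/m(y))² + m(y) u(y)²)` gives
the first claim. For the rest, `u(x) L̃v(x) m(x) = ∑_y u(x) b(x,y) (v(x) - v(y)) + c(x) u(x) v(x)`.
Since `v` is finitely supported, the double series of the edge terms `u(x) b(x,y) (v(x) - v(y))`
is a combination of finitely many rows and columns of `b` (against `1` or `u`), hence converges
absolutely on `V × V`. Adding it to its transpose and using `b(x,y) = b(y,x)` gives the energy
`b(x,y) (u(x) - u(y)) (v(x) - v(y))`, so it sums to half the energy; the same holds with `u` and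
`v` exchanged, and the energy is symmetric in `u` and `v`.
-/

open Function

lemma summable_mul_of_summable_weighted_sq {ι : Type*} {m f g : ι → ℝ} (hm : ∀ i, 0 < m i)
    (hf : Summable fun i => m i * (f i / m i) ^ 2) (hg : Summable fun i => m i * g i ^ 2) :
    Summable fun i => f i * g i := by
  refine ((hf.add hg).mul_left (1 / 2)).of_norm_bounded fun i => ?_
  have hfg : f i * g i = m i * (f i / m i * g i) := by field_simp [(hm i).ne']
  rw [Real.norm_eq_abs, hfg, abs_mul, abs_of_pos (hm i), ← mul_add, mul_left_comm]
  refine mul_le_mul_of_nonneg_left ?_ (hm i).le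
  rw [abs_le]
  constructor <;> nlinarith [sq_nonneg (f i / m i - g i), sq_nonneg (f i / m i + g i)]

lemma summable_prod_mul_left_of_finite {α β : Type*} {w : α → ℝ} (hw : (support w).Finite)
    {ψ : α → β → ℝ} (hψ : ∀ x, Summable (ψ x)) :
    Summable fun p : α × β => w p.1 * ψ p.1 p.2 := by
  rw [← summable_abs_iff, summable_prod_of_nonneg fun _ => abs_nonneg _]
  refine ⟨fun x => by simpa only [abs_mul] using ((hψ x).abs.mul_left |w x|), ?_⟩
  refine summable_of_hasFiniteSupport (hw.subset fun x hx => ?_)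
  contrapose! hx
  simp [notMem_support.1 hx]

lemma summable_prod_mul_right_of_finite {α β : Type*} {w : β → ℝ} (hw : (support w).Finite)
    {ψ : α → β → ℝ} (hψ : ∀ y, Summable fun x => ψ x y) :
    Summable fun p : α × β => ψ p.1 p.2 * w p.2 := by
  have := (Equiv.prodComm α β).summable_iff.2
    (summable_prod_mul_left_of_finite hw (ψ := fun y x => ψ x y) hψ)
  exact this.congr fun p => mul_comm _ _

section EdgeSums

variable {V : Type*} (b : V → V → ℝ) (f g : V → ℝ)

def edgeEnergy (p : V × V) : ℝ := b p.1 p.2 * (f p.1 - f p.2) * (g p.1 - g p.2)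

def edgePairing (p : V × V) : ℝ := f p.1 * (b p.1 p.2 * (g p.1 - g p.2))

lemma edgeEnergy_comm : edgeEnergy b f g = edgeEnergy b g f := by
  ext p; simp only [edgeEnergy]; ring

variable {b f g}

lemma edgeEnergy_eq_add_swap (hb : ∀ x y, b x y = b y x) (p : V × V) :
    edgeEnergy b f g p = edgePairing b f g p + edgePairing b f g p.swap := by
  simp only [edgeEnergy, edgePairing, Prod.fst_swap, Prod.snd_swap, hb p.2 p.1]
  ring

lemma Summable.edgePairing_swap (hF : Summable (edgePairing b f g)) :
    Summable fun p : V × V => edgePairing b f g p.swap :=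
  (Equiv.prodComm V V).summable_iff.2 hF

lemma Summable.edgeEnergy (hb : ∀ x y, b x y = b y x) (hF : Summable (edgePairing b f g)) :
    Summable (edgeEnergy b f g) :=
  (hF.add hF.edgePairing_swap).congr fun p => (edgeEnergy_eq_add_swap hb p).symm

lemma tsum_edgeEnergy_eq_two_mul (hb : ∀ x y, b x y = b y x)
    (hF : Summable (edgePairing b f g)) :
    ∑' p, edgeEnergy b f g p = 2 * ∑' p, edgePairing b f g p := by
  have hswap := (Equiv.prodComm V V).tsum_eq (edgePairing b f g)
  simp only [Equiv.prodComm_apply] at hswap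
  rw [tsum_congr (edgeEnergy_eq_add_swap hb), hF.tsum_add hF.edgePairing_swap, hswap]
  ring

lemma summable_edgePairing_of_finite_left (hb : ∀ x, Summable fun y => b x y)
    (hf : (support f).Finite) (hbg : ∀ x, Summable fun y => b x y * g y) :
    Summable (edgePairing b f g) := by
  have hfg : (support fun x => f x * g x).Finite := hf.subset (support_mul_subset_left _ _)
  refine ((summable_prod_mul_left_of_finite hfg hb).sub
    (summable_prod_mul_left_of_finite hf hbg)).congr fun p => ?_
  simp only [edgePairing]
  ring

lemma summable_edgePairing_of_finite_right (hb_symm : ∀ x y, b x y = b y x)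
    (hb : ∀ x, Summable fun y => b x y) (hg : (support g).Finite)
    (hbf : ∀ x, Summable fun y => b x y * f y) : Summable (edgePairing b f g) := by
  have hfg : (support fun x => f x * g x).Finite := hg.subset (support_mul_subset_right _ _)
  have hcol : ∀ y, Summable fun x => f x * b x y := fun y =>
    (hbf y).congr fun x => by rw [hb_symm, mul_comm]
  refine ((summable_prod_mul_left_of_finite hfg hb).sub
    (summable_prod_mul_right_of_finite hg hcol)).congr fun p => ?_
  simp only [edgePairing]
  ring

end EdgeSums

section Green

variable {V : Type*} {b : V → V → ℝ} {c m : V → ℝ} (f g : V → ℝ)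

lemma mul_formalL_mul_eq {x : V} (hm : m x ≠ 0) :
    f x * formalL b c m g x * m x = ∑' y, edgePairing b f g (x, y) + c x * f x * g x := by
  simp only [formalL, edgePairing]
  rw [tsum_mul_left]
  field_simp

variable {f g}

lemma summable_mul_formalL_mul (hm : ∀ x, m x ≠ 0) (hF : Summable (edgePairing b f g))
    (hc : Summable fun x => c x * f x * g x) :
    Summable fun x => f x * formalL b c m g x * m x :=
  (hF.prod.add hc).congr fun x => (mul_formalL_mul_eq f g (hm x)).symm

lemma tsum_mul_formalL_mul (hm : ∀ x, m x ≠ 0) (hb : ∀ x y, b x y = b y x)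
    (hF : Summable (edgePairing b f g)) (hc : Summable fun x => c x * f x * g x) :
    ∑' x, f x * formalL b c m g x * m x =
      1 / 2 * ∑' p, edgeEnergy b f g p + ∑' x, c x * f x * g x := by
  rw [tsum_congr fun x => mul_formalL_mul_eq f g (hm x), hF.prod.tsum_add hc, ← hF.tsum_prod,
    tsum_edgeEnergy_eq_two_mul hb hF]
  ring

end Green

theorem greens_formula_general
    (V : Type*) (m : V → ℝ) (hm : ∀ x, 0 < m x)
    (b : V → V → ℝ) (c : V → ℝ)
    (hb_symm : ∀ x y, b x y = b y x) (hb_sum : ∀ x, Summable fun y => b x y)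
    (hbm : ∀ x : V, Summable fun y => m y * (b x y / m y) ^ 2) :
    (∀ u : V → ℝ, (Summable fun x => m x * u x ^ 2) →
      ∀ x, Summable fun y => b x y * |u y|) ∧
    (∀ u v : V → ℝ, (Summable fun x => m x * u x ^ 2) → (Function.support v).Finite →
      (Summable fun x => |u x * formalL b c m v x * m x|) ∧
      (Summable fun x => |formalL b c m u x * v x * m x|) ∧
      (Summable fun p : V × V => |b p.1 p.2 * (u p.1 - u p.2) * (v p.1 - v p.2)|) ∧
      (Summable fun x => |c x * u x * v x|) ∧
      (∑' x, u x * formalL b c m v x * m x) = (∑' x, formalL b c m u x * v x * m x) ∧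
      (∑' x, u x * formalL b c m v x * m x) =
        (1 / 2) * (∑' p : V × V, b p.1 p.2 * (u p.1 - u p.2) * (v p.1 - v p.2))
          + ∑' x, c x * u x * v x) := by
  have hbu : ∀ u : V → ℝ, (Summable fun x => m x * u x ^ 2) →
      ∀ x, Summable fun y => b x y * u y :=
    fun u hu x => summable_mul_of_summable_weighted_sq hm (hbm x) hu
  refine ⟨fun u hu => hbu (|u ·|) (by simpa only [sq_abs] using hu), fun u v hu hv => ?_⟩
  have hm0 : ∀ x, m x ≠ 0 := fun x => (hm x).ne'
  have huv := summable_edgePairing_of_finite_right hb_symm hb_sum hv (hbu u hu)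
  have hvu := summable_edgePairing_of_finite_left hb_sum hv (hbu u hu)
  have hcuv : Summable fun x => c x * u x * v x :=
    summable_of_hasFiniteSupport (hv.subset (support_mul_subset_right _ _))
  have hcvu : Summable fun x => c x * v x * u x :=
    hcuv.congr fun x => mul_right_comm _ _ _
  have hGreen := tsum_mul_formalL_mul hm0 hb_symm huv hcuv
  have hvuGreen := tsum_mul_formalL_mul hm0 hb_symm hvu hcvu
  refine ⟨(summable_mul_formalL_mul hm0 huv hcuv).abs,
    (summable_mul_formalL_mul hm0 hvu hcvu).abs.congr fun x => by rw [mul_comm (v x)],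
    (huv.edgeEnergy hb_symm).abs, hcuv.abs, ?_, hGreen⟩
  calc ∑' x, u x * formalL b c m v x * m x
      = 1 / 2 * ∑' p, edgeEnergy b v u p + ∑' x, c x * v x * u x := by
        rw [hGreen, edgeEnergy_comm, tsum_congr fun x => mul_right_comm (c x) (u x) (v x)]
    _ = ∑' x, formalL b c m u x * v x * m x := by
        rw [← hvuGreen]
        exact tsum_congr fun x => by ring

/-- **Green's formula.** Suppose `y ↦ b(x,y)/m(y) ∈ ℓ²(V,m)` for all `x`.
Then every `u ∈ ℓ²(V,m)` lies in the formal domain of `L̃`, and for `u ∈ ℓ²(V,m)` and `v`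
finitely supported the sums `∑_x u(x) L̃v(x) m(x)`, `∑_x L̃u(x) v(x) m(x)` and
`(1/2)∑_{x,y} b(x,y)(u(x)−u(y))(v(x)−v(y)) + ∑_x c(x)u(x)v(x)` converge absolutely
and coincide. -/
theorem greens_formula
    (V : Type*) [Countable V] (m : V → ℝ) (hm : ∀ x, 0 < m x)
    (b : V → V → ℝ) (c : V → ℝ)
    (hb_symm : ∀ x y, b x y = b y x) (hb_nonneg : ∀ x y, 0 ≤ b x y)
    (hb_diag : ∀ x, b x x = 0) (hb_sum : ∀ x, Summable fun y => b x y)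
    (hc : ∀ x, 0 ≤ c x)
    (hbm : ∀ x : V, Summable fun y => m y * (b x y / m y) ^ 2) :
    (∀ u : V → ℝ, (Summable fun x => m x * u x ^ 2) →
      ∀ x, Summable fun y => b x y * |u y|) ∧
    (∀ u v : V → ℝ, (Summable fun x => m x * u x ^ 2) → (Function.support v).Finite →
      (Summable fun x => |u x * formalL b c m v x * m x|) ∧
      (Summable fun x => |formalL b c m u x * v x * m x|) ∧
      (Summable fun p : V × V => |b p.1 p.2 * (u p.1 - u p.2) * (v p.1 - v p.2)|) ∧
      (Summable fun x => |c x * u x * v x|) ∧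
      (∑' x, u x * formalL b c m v x * m x) = (∑' x, formalL b c m u x * v x * m x) ∧
      (∑' x, u x * formalL b c m v x * m x) =
        (1 / 2) * (∑' p : V × V, b p.1 p.2 * (u p.1 - u p.2) * (v p.1 - v p.2))
          + ∑' x, c x * u x * v x) :=
  greens_formula_general V m hm b c hb_symm hb_sum hbm
end

section
/- If N : [0,∞)×V → ℝ is a bounded solution of the heat equation d/dt N_t + L̃ N_t = 0 with N_0 ≡ 0, then for any α > 0 the function v := ∫_0^∞ e^{−tα} N_t dt satisfies (L̃ + α)v = 0. -/
/-!
Multiplying the heat equation by `e^{-tα}` and integrating by parts over `(0, ∞)` — the boundary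
terms vanish because `N_0 = 0` and `N` is bounded — gives `∫ e^{-tα} L̃N_t dt = -α v`. Since `N` is
bounded and `b(x, ·)` is summable, the sum defining `L̃` commutes with the time integral, so the
left-hand side is `L̃v`.
-/

open MeasureTheory

open Filter Topology Set

noncomputable def laplaceTransform (α : ℝ) (f : ℝ → ℝ) : ℝ :=
  ∫ t in Ioi 0, Real.exp (-t * α) * f t

section Laplace

variable {α C : ℝ} {f g : ℝ → ℝ}

lemma integral_exp_neg_mul_Ioi (hα : 0 < α) : ∫ t in Ioi 0, Real.exp (-t * α) = 1 / α := by
  have h := integral_exp_mul_Ioi (neg_lt_zero.2 hα) 0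
  rw [mul_zero, Real.exp_zero, neg_div_neg_eq] at h
  simpa only [neg_mul_comm, mul_comm α] using h

lemma integrableOn_exp_neg_mul_Ioi (hα : 0 < α) :
    IntegrableOn (fun t => Real.exp (-t * α)) (Ioi 0) := by
  simpa only [neg_mul_comm, mul_comm α] using exp_neg_integrableOn_Ioi 0 hα

lemma integrableOn_exp_neg_mul_mul (hα : 0 < α)
    (hf : AEStronglyMeasurable f (volume.restrict (Ioi 0))) (hfC : ∀ t > 0, |f t| ≤ C) :
    IntegrableOn (fun t => Real.exp (-t * α) * f t) (Ioi 0) :=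
  (integrableOn_exp_neg_mul_Ioi hα).mul_bdd hf <|
    (ae_restrict_mem measurableSet_Ioi).mono fun t ht => hfC t ht

lemma integral_abs_exp_neg_mul_mul_le (hα : 0 < α) (hfC : ∀ t > 0, |f t| ≤ C) :
    ∫ t in Ioi 0, |Real.exp (-t * α) * f t| ≤ C / α := by
  calc ∫ t in Ioi 0, |Real.exp (-t * α) * f t|
      ≤ ∫ t in Ioi 0, C * Real.exp (-t * α) := by
        refine integral_mono_of_nonneg (ae_of_all _ fun t => abs_nonneg _)
          ((integrableOn_exp_neg_mul_Ioi hα).const_mul C) ?_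
        filter_upwards [ae_restrict_mem measurableSet_Ioi] with t ht
        rw [abs_mul, Real.abs_exp, mul_comm]
        exact mul_le_mul_of_nonneg_right (hfC t ht) (Real.exp_pos _).le
    _ = C / α := by rw [integral_const_mul, integral_exp_neg_mul_Ioi hα, mul_one_div]

lemma abs_laplaceTransform_le (hα : 0 < α) (hfC : ∀ t > 0, |f t| ≤ C) :
    |laplaceTransform α f| ≤ C / α :=
  abs_integral_le_integral_abs.trans (integral_abs_exp_neg_mul_mul_le hα hfC)

lemma tendsto_exp_neg_mul_mul_atTop (hα : 0 < α) (hfC : ∀ t > 0, |f t| ≤ C) :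
    Tendsto (fun t => Real.exp (-t * α) * f t) atTop (𝓝 0) := by
  have hexp : Tendsto (fun t => Real.exp (-t * α)) atTop (𝓝 0) :=
    Real.tendsto_exp_atBot.comp (tendsto_neg_atTop_atBot.atBot_mul_const hα)
  exact hexp.zero_mul_isBoundedUnder_le
    ⟨C, eventually_map.2 <| (eventually_gt_atTop 0).mono fun t ht => hfC t ht⟩

lemma laplaceTransform_neg : laplaceTransform α (fun t => -f t) = -laplaceTransform α f := by
  simp only [laplaceTransform, mul_neg, integral_neg]

lemma laplaceTransform_const_mul (a : ℝ) :
    laplaceTransform α (fun t => a * f t) = a * laplaceTransform α f := by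
  simp only [laplaceTransform, mul_left_comm _ a, integral_const_mul]

lemma laplaceTransform_add (hf : IntegrableOn (fun t => Real.exp (-t * α) * f t) (Ioi 0))
    (hg : IntegrableOn (fun t => Real.exp (-t * α) * g t) (Ioi 0)) :
    laplaceTransform α (fun t => f t + g t) = laplaceTransform α f + laplaceTransform α g := by
  simp only [laplaceTransform, mul_add, integral_add hf hg]

lemma laplaceTransform_sub (hf : IntegrableOn (fun t => Real.exp (-t * α) * f t) (Ioi 0))
    (hg : IntegrableOn (fun t => Real.exp (-t * α) * g t) (Ioi 0)) :
    laplaceTransform α (fun t => f t - g t) = laplaceTransform α f - laplaceTransform α g := by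
  simp only [laplaceTransform, mul_sub, integral_sub hf hg]

theorem laplaceTransform_of_hasDerivAt {f' : ℝ → ℝ} {C' : ℝ} (hα : 0 < α)
    (hcont : ContinuousWithinAt f (Ici 0) 0) (hderiv : ∀ t > 0, HasDerivAt f (f' t) t)
    (hfC : ∀ t > 0, |f t| ≤ C) (hf'C : ∀ t > 0, |f' t| ≤ C') :
    laplaceTransform α f' = α * laplaceTransform α f - f 0 := by
  have hf_meas : AEStronglyMeasurable f (volume.restrict (Ioi 0)) :=
    ContinuousOn.aestronglyMeasurable (fun t ht => (hderiv t ht).continuousAt.continuousWithinAt)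
      measurableSet_Ioi
  have hf'_meas : AEStronglyMeasurable f' (volume.restrict (Ioi 0)) :=
    (aestronglyMeasurable_deriv f _).congr <|
      (ae_restrict_mem measurableSet_Ioi).mono fun t ht => (hderiv t ht).deriv
  have hf_int := integrableOn_exp_neg_mul_mul hα hf_meas hfC
  have hf'_int := integrableOn_exp_neg_mul_mul hα hf'_meas hf'C
  have hexp : ∀ t, HasDerivAt (fun s => Real.exp (-s * α)) (-α * Real.exp (-t * α)) t :=
    fun t => by simpa [mul_comm] using ((hasDerivAt_id t).neg.mul_const α).exp
  have hprod_int : IntegrableOn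
      (fun t => -α * Real.exp (-t * α) * f t + Real.exp (-t * α) * f' t) (Ioi 0) := by
    refine ((hf_int.const_mul (-α)).add hf'_int).congr (ae_of_all _ fun t => ?_)
    simp only [Pi.add_apply, mul_assoc]
  have hprod := integral_Ioi_of_hasDerivAt_of_tendsto
    (f := fun t => Real.exp (-t * α) * f t)
    ((hexp 0).continuousAt.continuousWithinAt.mul hcont)
    (fun t ht => (hexp t).mul (hderiv t ht)) hprod_int
    (tendsto_exp_neg_mul_mul_atTop hα hfC)
  rw [integral_add (by simpa only [mul_assoc] using hf_int.const_mul (-α)) hf'_int] at hprod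
  simp only [mul_assoc, integral_const_mul, neg_zero, zero_mul, Real.exp_zero, one_mul] at hprod
  rw [laplaceTransform, laplaceTransform]
  linarith

end Laplace

section Summation

variable {ι : Type*} {w u : ι → ℝ} {C : ℝ}

lemma summable_mul_of_abs_le (hw : Summable w) (hu : ∀ i, |u i| ≤ C) :
    Summable fun i => w i * u i :=
  (hw.abs.mul_right C).of_norm_bounded fun i => by
    rw [Real.norm_eq_abs, abs_mul]
    exact mul_le_mul_of_nonneg_left (hu i) (abs_nonneg _)

lemma abs_tsum_mul_le (hw : Summable w) (hu : ∀ i, |u i| ≤ C) :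
    |∑' i, w i * u i| ≤ (∑' i, |w i|) * C :=
  tsum_of_norm_bounded (hw.abs.hasSum.mul_right C) fun i => by
    rw [Real.norm_eq_abs, abs_mul]
    exact mul_le_mul_of_nonneg_left (hu i) (abs_nonneg _)

lemma aestronglyMeasurable_tsum [Countable ι] {X E : Type*} [MeasurableSpace X] {μ : Measure X}
    [NormedAddCommGroup E] {F : ι → X → E} (hF : ∀ i, AEStronglyMeasurable (F i) μ)
    (hsum : ∀ᵐ x ∂μ, Summable fun i => F i x) :
    AEStronglyMeasurable (fun x => ∑' i, F i x) μ :=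
  aestronglyMeasurable_of_tendsto_ae atTop
    (fun s => s.aestronglyMeasurable_fun_sum fun i _ => hF i) (hsum.mono fun _ hx => hx.hasSum)

theorem tsum_mul_laplaceTransform [Countable ι] {α : ℝ} {F : ι → ℝ → ℝ} (hα : 0 < α)
    (hw : Summable w) (hF : ∀ i, AEStronglyMeasurable (F i) (volume.restrict (Ioi 0)))
    (hFC : ∀ i, ∀ t > 0, |F i t| ≤ C) :
    ∑' i, w i * laplaceTransform α (F i) = laplaceTransform α fun t => ∑' i, w i * F i t := by
  have hint : ∀ i, Integrable (fun t => w i * (Real.exp (-t * α) * F i t))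
      (volume.restrict (Ioi 0)) := fun i =>
    (integrableOn_exp_neg_mul_mul hα (hF i) (hFC i)).const_mul _
  have hnorm : Summable fun i => ∫ t in Ioi 0, ‖w i * (Real.exp (-t * α) * F i t)‖ := by
    refine (hw.abs.mul_right (C / α)).of_nonneg_of_le
      (fun i => integral_nonneg fun t => norm_nonneg _) fun i => ?_
    simp only [Real.norm_eq_abs, abs_mul (w i), integral_const_mul]
    exact mul_le_mul_of_nonneg_left (integral_abs_exp_neg_mul_mul_le hα (hFC i)) (abs_nonneg _)
  simp only [laplaceTransform, ← integral_const_mul]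
  rw [integral_tsum_of_summable_integral_norm hint hnorm]
  simp only [mul_left_comm (w _), tsum_mul_left]

end Summation

section FormalLaplacian

variable {V : Type*} {b : V → V → ℝ} {c m u : V → ℝ} {C : ℝ} {x : V}

lemma abs_formalL_le (hb : Summable (b x)) (hu : ∀ y, |u y| ≤ C) :
    |formalL b c m u x| ≤ |1 / m x| * ((∑' y, |b x y|) * (2 * C)) + |c x / m x| * C := by
  have hdiff : ∀ y, |u x - u y| ≤ 2 * C := fun y =>
    (abs_sub _ _).trans (by linarith [hu x, hu y])
  calc |formalL b c m u x|
      ≤ |1 / m x| * |∑' y, b x y * (u x - u y)| + |c x / m x| * |u x| := by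
        rw [formalL, ← abs_mul, ← abs_mul]
        exact abs_add_le _ _
    _ ≤ _ := by
        gcongr
        · exact abs_tsum_mul_le hb hdiff
        · exact hu x

theorem formalL_laplaceTransform [Countable V] {N : ℝ → V → ℝ} {α : ℝ} (hα : 0 < α)
    (hb : Summable (b x))
    (hN : ∀ y, AEStronglyMeasurable (fun t => N t y) (volume.restrict (Ioi 0)))
    (hNC : ∀ t > 0, ∀ y, |N t y| ≤ C) :
    formalL b c m (fun y => laplaceTransform α fun t => N t y) x =
      laplaceTransform α fun t => formalL b c m (N t) x := by
  have hint : ∀ y, IntegrableOn (fun t => Real.exp (-t * α) * N t y) (Ioi 0) := fun y =>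
    integrableOn_exp_neg_mul_mul hα (hN y) fun t ht => hNC t ht y
  have hdiff_meas : ∀ y, AEStronglyMeasurable (fun t => N t x - N t y)
      (volume.restrict (Ioi 0)) := fun y => (hN x).sub (hN y)
  have hdiffC : ∀ y, ∀ t > 0, |N t x - N t y| ≤ 2 * C := fun y t ht =>
    (abs_sub _ _).trans (by linarith [hNC t ht x, hNC t ht y])
  set S : ℝ → ℝ := fun t => ∑' y, b x y * (N t x - N t y)
  have hS_int : IntegrableOn (fun t => Real.exp (-t * α) * S t) (Ioi 0) :=
    integrableOn_exp_neg_mul_mul hα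
      (aestronglyMeasurable_tsum (fun y => (hdiff_meas y).const_mul _) <|
        (ae_restrict_mem measurableSet_Ioi).mono fun t ht =>
          summable_mul_of_abs_le hb fun y => hdiffC y t ht)
      fun t ht => abs_tsum_mul_le hb fun y => hdiffC y t ht
  have hsum : ∑' y, b x y * (laplaceTransform α (fun t => N t x) -
      laplaceTransform α fun t => N t y) = laplaceTransform α S := by
    simp only [← laplaceTransform_sub (hint x) (hint _)]
    exact tsum_mul_laplaceTransform hα hb hdiff_meas hdiffC
  simp only [formalL]
  rw [hsum, ← laplaceTransform_const_mul, ← laplaceTransform_const_mul,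
    ← laplaceTransform_add]
  · simpa only [IntegrableOn, mul_left_comm] using hS_int.const_mul (1 / m x)
  · simpa only [IntegrableOn, mul_left_comm] using (hint x).const_mul (c x / m x)

end FormalLaplacian

theorem laplace_transform_of_heat_solution_general
    (V : Type*) [Countable V] (m : V → ℝ)
    (b : V → V → ℝ) (c : V → ℝ)
    (hb_sum : ∀ x, Summable fun y => b x y)
    (α : ℝ) (hα : 0 < α)
    (N : ℝ → V → ℝ)
    (hbdd : ∃ C, ∀ t, 0 ≤ t → ∀ x, |N t x| ≤ C)
    (hN0 : ∀ x, N 0 x = 0)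
    (hheat : ∀ x, ∀ t, 0 ≤ t →
      HasDerivAt (fun s => N s x) (-(formalL b c m (N t) x)) t)
    (v : V → ℝ)
    (hv : ∀ x, v x = ∫ t in Set.Ioi (0 : ℝ), Real.exp (-t * α) * N t x) :
    (∀ x, Summable fun y => b x y * |v y|) ∧
      ∀ x, formalL b c m v x + α * v x = 0 := by
  obtain ⟨C, hC⟩ := hbdd
  have hNC : ∀ t > 0, ∀ y, |N t y| ≤ C := fun t ht => hC t ht.le
  have hv_eq : ∀ y, v y = laplaceTransform α fun t => N t y := hv
  have hvC : ∀ y, |v y| ≤ C / α := fun y =>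
    hv_eq y ▸ abs_laplaceTransform_le hα fun t ht => hNC t ht y
  refine ⟨fun x => summable_mul_of_abs_le (hb_sum x) fun y => (abs_abs _).trans_le (hvC y),
    fun x => ?_⟩
  have hN_meas : ∀ y, AEStronglyMeasurable (fun t => N t y) (volume.restrict (Ioi 0)) := fun y =>
    ContinuousOn.aestronglyMeasurable
      (fun t ht => (hheat y t ht.le).continuousAt.continuousWithinAt) measurableSet_Ioi
  have hderiv := laplaceTransform_of_hasDerivAt hα
    (hheat x 0 le_rfl).continuousAt.continuousWithinAt (fun t ht => hheat x t ht.le)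
    (fun t ht => hNC t ht x)
    fun t ht => (abs_neg _).trans_le (abs_formalL_le (hb_sum x) (hNC t ht))
  rw [laplaceTransform_neg, hN0, ← formalL_laplaceTransform hα (hb_sum x) hN_meas hNC,
    ← funext hv_eq, ← hv_eq] at hderiv
  linarith

/-- If `N` is a bounded solution of the heat equation
`d/dt N_t + L̃N_t = 0` with `N_0 ≡ 0`, then for any `α > 0` the function
`v := ∫_0^∞ e^{−tα} N_t dt` solves `(L̃ + α)v = 0`. -/
theorem laplace_transform_of_heat_solution
    (V : Type*) [Countable V] (m : V → ℝ) (hm : ∀ x, 0 < m x)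
    (b : V → V → ℝ) (c : V → ℝ)
    (hb_symm : ∀ x y, b x y = b y x) (hb_nonneg : ∀ x y, 0 ≤ b x y)
    (hb_diag : ∀ x, b x x = 0) (hb_sum : ∀ x, Summable fun y => b x y)
    (hc : ∀ x, 0 ≤ c x)
    (α : ℝ) (hα : 0 < α)
    (N : ℝ → V → ℝ)
    (hbdd : ∃ C, ∀ t, 0 ≤ t → ∀ x, |N t x| ≤ C)
    (hN0 : ∀ x, N 0 x = 0)
    (hcont : ∀ x, ContinuousOn (fun t => N t x) (Set.Ici 0))
    (hdom : ∀ t, 0 ≤ t → ∀ x, Summable fun y => b x y * |N t y|)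
    (hheat : ∀ x, ∀ t, 0 ≤ t →
      HasDerivAt (fun s => N s x) (-(formalL b c m (N t) x)) t)
    (v : V → ℝ)
    (hv : ∀ x, v x = ∫ t in Set.Ioi (0 : ℝ), Real.exp (-t * α) * N t x) :
    (∀ x, Summable fun y => b x y * |v y|) ∧
      ∀ x, formalL b c m v x + α * v x = 0 :=
  laplace_transform_of_heat_solution_general V m b c hb_sum α hα N hbdd hN0 hheat v hv
end

section
/- Let N = {0,1,2,...} with edge weights b(x,y)=1 iff |x−y|=1, c ≡ 0, m ≡ 1. Let α > 0 and u a positive function with (L̃_N + α)u(x) = 0 for all x ≥ 1. If for some x ≥ 1 one has u(x) ≥ (2/(2+α)) u(x−1), then u(y) ≥ (1 + α/2)^{y−x} u(x) for all y ≥ x, so u grows exponentially. -/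
/-!
With `r = 1 + α/2` the equation reads `u (n+1) = 2 r u n - u (n-1)`, and the hypothesis says
`u (x-1) ≤ r u x`. Under the recurrence, `u (n-1) ≤ r u n` forces `u (n+1) ≥ r u n`, which for
`r ≥ 1` and `u ≥ 0` gives back `u n ≤ r u (n+1)`. So the ratio bound propagates to the right and
each step multiplies `u` by at least `r`.
-/

section SecondOrderRecurrence

variable {r : ℝ} {u : ℕ → ℝ} {x : ℕ}

theorem mul_le_succ_of_recurrence {n : ℕ} (hrec : u (n + 1) = 2 * r * u n - u (n - 1))
    (h : u (n - 1) ≤ r * u n) : r * u n ≤ u (n + 1) := by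
  linarith

theorem le_mul_succ_of_mul_le_succ (hr : 1 ≤ r) {n : ℕ} (hu : 0 ≤ u n)
    (h : r * u n ≤ u (n + 1)) : u n ≤ r * u (n + 1) := by
  have h_mono : u n ≤ u (n + 1) := (le_mul_of_one_le_left hu hr).trans h
  exact h_mono.trans (le_mul_of_one_le_left (hu.trans h_mono) hr)

variable (hr : 1 ≤ r) (hu : ∀ n, 0 ≤ u n)
  (hrec : ∀ n, x ≤ n → u (n + 1) = 2 * r * u n - u (n - 1))
  (hstart : u (x - 1) ≤ r * u x)
include hr hu hrec hstart

theorem pred_le_mul_of_recurrence : ∀ n, x ≤ n → u (n - 1) ≤ r * u n := by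
  refine Nat.le_induction hstart fun n hn ih => ?_
  exact le_mul_succ_of_mul_le_succ hr (hu n) (mul_le_succ_of_recurrence (hrec n hn) ih)

theorem pow_mul_le_of_recurrence : ∀ y, x ≤ y → r ^ (y - x) * u x ≤ u y := by
  refine Nat.le_induction (by simp) fun n hn ih => ?_
  have h_step := mul_le_succ_of_recurrence (hrec n hn)
    (pred_le_mul_of_recurrence hr hu hrec hstart n hn)
  calc r ^ (n + 1 - x) * u x = r * (r ^ (n - x) * u x) := by
        rw [Nat.sub_add_comm hn, pow_succ']; ring
    _ ≤ r * u n := mul_le_mul_of_nonneg_left ih (by linarith)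
    _ ≤ u (n + 1) := h_step

end SecondOrderRecurrence

/-- On `ℕ` with nearest-neighbour edge weights `1`, `c ≡ 0`, `m ≡ 1`
(so that `L̃_N u(x) = 2u(x) − u(x−1) − u(x+1)` for `x ≥ 1`): if `u > 0` satisfies
`(L̃_N + α)u(x) = 0` for all `x ≥ 1` and `u(x) ≥ (2/(2+α)) u(x−1)` for some `x ≥ 1`,
then `u(y) ≥ (1 + α/2)^{y−x} u(x)` for all `y ≥ x`, so `u` grows exponentially. -/
theorem exponential_growth_on_N
    (α : ℝ) (hα : 0 < α)
    (u : ℕ → ℝ) (hu : ∀ n, 0 < u n)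
    (heq : ∀ n, 1 ≤ n → (2 * u n - u (n - 1) - u (n + 1)) + α * u n = 0)
    (x : ℕ) (hx : 1 ≤ x)
    (hstart : (2 / (2 + α)) * u (x - 1) ≤ u x) :
    ∀ y, x ≤ y → (1 + α / 2) ^ (y - x) * u x ≤ u y := by
  have hr : 1 ≤ 1 + α / 2 := by linarith
  have hrec : ∀ n, x ≤ n → u (n + 1) = 2 * (1 + α / 2) * u n - u (n - 1) := fun n hn => by
    linarith [heq n (hx.trans hn)]
  have hstart' : u (x - 1) ≤ (1 + α / 2) * u x := by
    have h2α : 0 < 2 + α := by linarith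
    rw [div_mul_eq_mul_div, div_le_iff₀ h2α] at hstart
    linarith
  exact pow_mul_le_of_recurrence hr (fun n => (hu n).le) hrec hstart'
end
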